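/- arXiv:2106.11158 — 3 statements merged into one kernel-verified Lean document; each statement's English description precedes it below -/
import Mathlib

section
/- If f is analytic on the unit disk with Re f(z) < 1 and a_0 = f(0) \in [0,1), then a_0 + \sum_{n=1}^\infty |a_n| r^n + (\frac{1}{1+a_0} + \frac{r}{1-r}) \sum_{n=1}^\infty |a_n|^2 r^{2n} + \frac{8}{9} \sum_{n=1}^\infty n |a_n|^2 r^{2n} \le 1 for all r \le 1/(5 - 2a_0). -/
open Metric MeasureTheory Real


lemma circle_exp_integral (j : ℤ) :
    (∫ θ in Set.Ioc (0:ℝ) (2*π), Complex.exp ((((j:ℝ) * θ : ℝ) : ℂ) * Complex.I))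
      = if j = 0 then ((2*π : ℝ) : ℂ) else 0 := by
  rw [← intervalIntegral.integral_of_le (by positivity : (0:ℝ) ≤ 2*π)]
  by_cases hj : j = 0
  · subst hj
    simp
  · rw [if_neg hj]
    have hc : (j:ℂ) * Complex.I ≠ 0 :=
      mul_ne_zero (Int.cast_ne_zero.mpr hj) Complex.I_ne_zero
    have h := integral_exp_mul_complex (a := 0) (b := 2*π) hc
    have heq : ∀ θ : ℝ, ((((j:ℝ) * θ : ℝ) : ℂ) * Complex.I) = ((j:ℂ) * Complex.I) * (θ:ℂ) := by
      intro θ; push_cast; ring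
    simp_rw [heq]
    rw [h]
    have h2 : (j:ℂ) * Complex.I * ((2*π : ℝ) : ℂ) = (j:ℤ) * (2*(π:ℂ)*Complex.I) := by
      push_cast; ring
    rw [h2, Complex.exp_int_mul_two_pi_mul_I]
    simp

lemma fourier_coeff (f : ℂ → ℂ) (a : ℕ → ℂ)
    (hsum : ∀ z ∈ ball (0 : ℂ) 1, HasSum (fun n => a n * z ^ n) (f z))
    (ρ : ℝ) (hρ0 : 0 < ρ) (hρ1 : ρ < 1) (k : ℤ) :
    (∫ θ in Set.Ioc (0:ℝ) (2*π),
        f ((ρ:ℂ) * Complex.exp ((θ:ℂ) * Complex.I))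
          * Complex.exp (((((-k : ℤ):ℝ) * θ : ℝ) : ℂ) * Complex.I))
      = if 0 ≤ k then ((2*π : ℝ) : ℂ) * a k.toNat * (ρ:ℂ) ^ k.toNat else 0 := by
  have hmem : ∀ θ : ℝ, (ρ:ℂ) * Complex.exp ((θ:ℂ) * Complex.I) ∈ ball (0:ℂ) 1 := by
    intro θ
    simp only [mem_ball_zero_iff, norm_mul,
      Complex.norm_exp_ofReal_mul_I, Complex.norm_real, Real.norm_eq_abs, abs_of_pos hρ0, mul_one]
    exact hρ1
  have hρmem : (ρ:ℂ) ∈ ball (0:ℂ) 1 := by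
    simp only [mem_ball_zero_iff, Complex.norm_real, Real.norm_eq_abs, abs_of_pos hρ0]
    exact hρ1
  have habs : Summable (fun m : ℕ => ‖a m‖ * ρ^m) := by
    refine (summable_norm_iff.mpr (hsum _ hρmem).summable).congr fun m => ?_
    simp [norm_mul, norm_pow, Complex.norm_real, Real.norm_eq_abs, abs_of_pos hρ0]
  set F : ℕ → ℝ → ℂ := fun m θ =>
    a m * (ρ:ℂ)^m * Complex.exp ((((((m:ℤ) - k : ℤ):ℝ) * θ : ℝ) : ℂ) * Complex.I) with hF
  have hFcont : ∀ m, Continuous (F m) := by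
    intro m
    apply continuous_const.mul
    exact Complex.continuous_exp.comp
      ((Complex.continuous_ofReal.comp (continuous_const.mul continuous_id)).mul continuous_const)
  have hFint : ∀ m, Integrable (F m) (volume.restrict (Set.Ioc (0:ℝ) (2*π))) := by
    intro m
    exact (hFcont m).integrableOn_Ioc
  have hFnorm : ∀ m θ, ‖F m θ‖ = ‖a m‖ * ρ^m := by
    intro m θ
    simp only [hF, norm_mul, norm_pow, Complex.norm_real, Real.norm_eq_abs,
      abs_of_pos hρ0, Complex.norm_exp_ofReal_mul_I, mul_one]
  have hFsum : Summable (fun m => ∫ θ in Set.Ioc (0:ℝ) (2*π), ‖F m θ‖) := by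
    refine (habs.mul_left (2*π)).congr fun m => ?_
    simp_rw [hFnorm]
    rw [setIntegral_const]
    simp [Real.volume_Ioc, ENNReal.toReal_ofReal (by positivity : (0:ℝ) ≤ 2*π), pi_pos.le]
  have main := hasSum_integral_of_summable_integral_norm (μ := volume.restrict (Set.Ioc (0:ℝ) (2*π))) hFint hFsum
  -- identify the tsum inside the integral
  have htsum : ∀ θ : ℝ, (∑' m, F m θ)
      = f ((ρ:ℂ) * Complex.exp ((θ:ℂ) * Complex.I))
          * Complex.exp (((((-k : ℤ):ℝ) * θ : ℝ) : ℂ) * Complex.I) := by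
    intro θ
    refine HasSum.tsum_eq ?_
    have h := (hsum _ (hmem θ)).mul_right
      (Complex.exp (((((-k : ℤ):ℝ) * θ : ℝ) : ℂ) * Complex.I))
    refine h.congr_fun fun m => ?_
    show a m * (ρ:ℂ)^m * Complex.exp _ = _
    rw [mul_pow, ← Complex.exp_nat_mul, mul_assoc, mul_assoc, mul_assoc, ← Complex.exp_add]
    congr 2
    push_cast
    ring
  have hIF : ∀ m : ℕ, (∫ θ in Set.Ioc (0:ℝ) (2*π), F m θ)
      = if (m:ℤ) = k then ((2*π:ℝ):ℂ) * a m * (ρ:ℂ)^m else 0 := by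
    intro m
    have h1 : (∫ θ in Set.Ioc (0:ℝ) (2*π), F m θ)
        = a m * (ρ:ℂ)^m * ∫ θ in Set.Ioc (0:ℝ) (2*π),
            Complex.exp ((((((m:ℤ) - k : ℤ):ℝ) * θ : ℝ) : ℂ) * Complex.I) := by
      rw [← integral_const_mul]
    rw [h1, circle_exp_integral]
    by_cases hmk : (m:ℤ) = k
    · rw [if_pos (by omega : (m:ℤ) - k = 0), if_pos hmk]
      ring
    · rw [if_neg (by omega : ¬ ((m:ℤ) - k = 0)), if_neg hmk, mul_zero]
  have hval : (∫ θ in Set.Ioc (0:ℝ) (2*π), ∑' i, F i θ)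
      = ∫ θ in Set.Ioc (0:ℝ) (2*π),
          f ((ρ:ℂ) * Complex.exp ((θ:ℂ) * Complex.I))
            * Complex.exp (((((-k : ℤ):ℝ) * θ : ℝ) : ℂ) * Complex.I) :=
    integral_congr_ae (Filter.Eventually.of_forall htsum)
  rw [hval] at main
  rw [funext hIF] at main
  by_cases hk : 0 ≤ k
  · rw [if_pos hk]
    have h3 := hasSum_ite_eq k.toNat (((2*π:ℝ):ℂ) * a k.toNat * (ρ:ℂ)^k.toNat)
    have h2 : HasSum (fun m : ℕ => if (m:ℤ) = k then ((2*π:ℝ):ℂ) * a m * (ρ:ℂ)^m else 0)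
        (((2*π:ℝ):ℂ) * a k.toNat * (ρ:ℂ)^k.toNat) := by
      refine h3.congr_fun fun m => ?_
      by_cases hm : (m:ℤ) = k
      · have hmt : m = k.toNat := by omega
        rw [if_pos hm, if_pos hmt, hmt]
      · rw [if_neg hm, if_neg (by omega : ¬ m = k.toNat)]
    exact (h2.unique main).symm
  · rw [if_neg hk]
    have h2 : HasSum (fun m : ℕ => if (m:ℤ) = k then ((2*π:ℝ):ℂ) * a m * (ρ:ℂ)^m else 0)
        (0 : ℂ) := by
      have : (fun m : ℕ => if (m:ℤ) = k then ((2*π:ℝ):ℂ) * a m * (ρ:ℂ)^m else 0)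
          = fun _ => (0:ℂ) := funext fun m => if_neg (by omega)
      rw [this]
      exact hasSum_zero
    exact (h2.unique main).symm


private lemma final_ineq (t r : ℝ) (h0 : 0 ≤ t) (h1 : t ≤ 1) (hr0 : 0 ≤ r)
    (h5 : r * (5 - 2*t) ≤ 1) :
    t + 2*(1-t)*r*(1-r)⁻¹ + (1/(1+t) + r/(1-r)) * ((2*(1-t))^2 * (r^2 * (1-r^2)⁻¹))
      + (8/9) * ((2*(1-t))^2 * (r^2 / (1-r^2)^2)) ≤ 1 := by
  have h3 : 3*r ≤ 1 := by nlinarith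
  have h1r : (0:ℝ) < 1 - r := by linarith
  have h1r2 : (0:ℝ) < 1 - r^2 := by nlinarith
  have h1t : (0:ℝ) < 1 + t := by linarith
  have hQ : 0 ≤ 9 - 18*r - 104*r^2 - 18*r^3 + 27*r^4 + 9*t - 18*t*r + 18*t*r^3 - 9*t*r^4
      + 32*t^2*r^2 + 36*t^2*r^3 + 36*t^2*r^4 := by
    nlinarith [mul_nonneg (sub_nonneg.2 h3) (sub_nonneg.2 h5), sq_nonneg (1-3*r), sq_nonneg (1-t),
      mul_nonneg (sub_nonneg.2 h3) h0, mul_nonneg (sub_nonneg.2 h3) hr0,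
      mul_nonneg (mul_nonneg (sub_nonneg.2 h3) (sub_nonneg.2 h3)) (sub_nonneg.2 h1),
      mul_nonneg (mul_nonneg h0 h0) (sq_nonneg (1-3*r)),
      mul_nonneg (sub_nonneg.2 h5) h0, mul_nonneg (sub_nonneg.2 h5) (sub_nonneg.2 h1),
      mul_nonneg hr0 (sub_nonneg.2 h1), sq_nonneg (t*(1-3*r))]
  rw [← sub_nonneg]
  have e : 1 - (t + 2*(1-t)*r*(1-r)⁻¹ + (1/(1+t) + r/(1-r)) * ((2*(1-t))^2 * (r^2 * (1-r^2)⁻¹))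
      + (8/9) * ((2*(1-t))^2 * (r^2 / (1-r^2)^2)))
      = ((1-t) * (9 - 18*r - 104*r^2 - 18*r^3 + 27*r^4 + 9*t - 18*t*r + 18*t*r^3 - 9*t*r^4
          + 32*t^2*r^2 + 36*t^2*r^3 + 36*t^2*r^4)) / (9*(1+t)*(1-r)^2*(1+r)^2) := by
    have hr1 : 1 - r ≠ 0 := ne_of_gt h1r
    have hr2 : 1 - r^2 ≠ 0 := ne_of_gt h1r2
    have ht : 1 + t ≠ 0 := ne_of_gt h1t
    have hpr : 1 + r ≠ 0 := by positivity
    field_simp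
    ring
  rw [e]
  apply div_nonneg (mul_nonneg (by linarith) hQ)
  positivity

lemma coeff_bound (f : ℂ → ℂ) (a : ℕ → ℂ) (a₀ : ℝ)
    (hsum : ∀ z ∈ ball (0 : ℂ) 1, HasSum (fun n => a n * z ^ n) (f z))
    (hre : ∀ z ∈ ball (0 : ℂ) 1, (f z).re < 1)
    (ha0 : a 0 = (a₀ : ℂ)) (n : ℕ) (hn : n ≠ 0) :
    ‖a n‖ ≤ 2 * (1 - a₀) := by
  have main : ∀ ρ : ℝ, 0 < ρ → ρ < 1 → ‖a n‖ * ρ^n ≤ 2 * (1 - a₀) := by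
    intro ρ hρ0 hρ1
    have hmem : ∀ θ : ℝ, (ρ:ℂ) * Complex.exp ((θ:ℂ) * Complex.I) ∈ ball (0:ℂ) 1 := by
      intro θ
      simp only [mem_ball_zero_iff, norm_mul,
        Complex.norm_exp_ofReal_mul_I, Complex.norm_real, Real.norm_eq_abs, abs_of_pos hρ0, mul_one]
      exact hρ1
    have hρmem : (ρ:ℂ) ∈ ball (0:ℂ) 1 := by
      simp only [mem_ball_zero_iff, Complex.norm_real, Real.norm_eq_abs, abs_of_pos hρ0]
      exact hρ1
    have habs : Summable (fun m : ℕ => ‖a m‖ * ρ^m) := by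
      refine (summable_norm_iff.mpr (hsum _ hρmem).summable).congr fun m => ?_
      simp [norm_mul, norm_pow, Complex.norm_real, Real.norm_eq_abs, abs_of_pos hρ0]
    have hzcont : Continuous (fun θ : ℝ => (ρ:ℂ) * Complex.exp ((θ:ℂ) * Complex.I)) :=
      continuous_const.mul (Complex.continuous_exp.comp
        (Complex.continuous_ofReal.mul continuous_const))
    have hcontf : Continuous fun θ : ℝ => f ((ρ:ℂ) * Complex.exp ((θ:ℂ) * Complex.I)) := by
      have heq : (fun θ : ℝ => f ((ρ:ℂ) * Complex.exp ((θ:ℂ) * Complex.I)))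
          = fun θ : ℝ => ∑' m, a m * ((ρ:ℂ) * Complex.exp ((θ:ℂ) * Complex.I))^m :=
        funext fun θ => ((hsum _ (hmem θ)).tsum_eq).symm
      rw [heq]
      refine continuous_tsum (fun m => continuous_const.mul (hzcont.pow m)) habs
        (fun m θ => ?_)
      have hz1 : ‖(ρ:ℂ) * Complex.exp ((θ:ℂ) * Complex.I)‖ = ρ := by
        simp [norm_mul, Complex.norm_exp_ofReal_mul_I,
          Complex.norm_real, Real.norm_eq_abs, abs_of_pos hρ0]
      rw [norm_mul, norm_pow, hz1]
    have hEcont : Continuous (fun θ : ℝ =>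
        Complex.exp (((((-(n:ℤ) : ℤ) : ℝ) * θ : ℝ) : ℂ) * Complex.I)) :=
      Complex.continuous_exp.comp
        ((Complex.continuous_ofReal.comp (continuous_const.mul continuous_id)).mul
          continuous_const)
    -- integral identities
    have I1 : (∫ θ in Set.Ioc (0:ℝ) (2*π),
        f ((ρ:ℂ) * Complex.exp ((θ:ℂ) * Complex.I))
          * Complex.exp (((((-(n:ℤ) : ℤ) : ℝ) * θ : ℝ) : ℂ) * Complex.I))
        = ((2*π : ℝ) : ℂ) * a n * (ρ:ℂ)^n := by
      have h := fourier_coeff f a hsum ρ hρ0 hρ1 (n:ℤ)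
      rw [if_pos (Int.natCast_nonneg n)] at h
      simpa only [Int.toNat_natCast] using h
    have I2 : (∫ θ in Set.Ioc (0:ℝ) (2*π),
        f ((ρ:ℂ) * Complex.exp ((θ:ℂ) * Complex.I))
          * Complex.exp (((((n:ℤ) : ℝ) * θ : ℝ) : ℂ) * Complex.I)) = 0 := by
      have h := fourier_coeff f a hsum ρ hρ0 hρ1 (-(n:ℤ))
      rw [if_neg (by omega)] at h
      simpa only [neg_neg] using h
    have I0 : (∫ θ in Set.Ioc (0:ℝ) (2*π),
        f ((ρ:ℂ) * Complex.exp ((θ:ℂ) * Complex.I)))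
        = ((2*π : ℝ) : ℂ) * (a₀ : ℂ) := by
      have h := fourier_coeff f a hsum ρ hρ0 hρ1 0
      rw [if_pos le_rfl] at h
      simp only [Int.toNat_zero, pow_zero, mul_one, ha0, neg_zero, Int.cast_zero, zero_mul,
        Complex.ofReal_zero, Complex.exp_zero] at h
      simpa only [mul_one] using h
    have Ic : (∫ θ in Set.Ioc (0:ℝ) (2*π),
        (starRingEnd ℂ) (f ((ρ:ℂ) * Complex.exp ((θ:ℂ) * Complex.I)))
          * Complex.exp (((((-(n:ℤ) : ℤ) : ℝ) * θ : ℝ) : ℂ) * Complex.I)) = 0 := by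
      have hptw : ∀ θ : ℝ,
          (starRingEnd ℂ) (f ((ρ:ℂ) * Complex.exp ((θ:ℂ) * Complex.I)))
            * Complex.exp (((((-(n:ℤ) : ℤ) : ℝ) * θ : ℝ) : ℂ) * Complex.I)
          = (starRingEnd ℂ) (f ((ρ:ℂ) * Complex.exp ((θ:ℂ) * Complex.I))
              * Complex.exp (((((n:ℤ) : ℝ) * θ : ℝ) : ℂ) * Complex.I)) := by
        intro θ
        rw [map_mul]
        congr 1
        rw [← Complex.exp_conj, map_mul, Complex.conj_I, Complex.conj_ofReal]
        push_cast
        ring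
      rw [integral_congr_ae (Filter.Eventually.of_forall hptw), integral_conj, I2, map_zero]
    have intfE : Integrable (fun θ : ℝ =>
        f ((ρ:ℂ) * Complex.exp ((θ:ℂ) * Complex.I))
          * Complex.exp (((((-(n:ℤ) : ℤ) : ℝ) * θ : ℝ) : ℂ) * Complex.I))
        (volume.restrict (Set.Ioc (0:ℝ) (2*π))) := (hcontf.mul hEcont).integrableOn_Ioc
    have intcE : Integrable (fun θ : ℝ =>
        (starRingEnd ℂ) (f ((ρ:ℂ) * Complex.exp ((θ:ℂ) * Complex.I)))
          * Complex.exp (((((-(n:ℤ) : ℤ) : ℝ) * θ : ℝ) : ℂ) * Complex.I))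
        (volume.restrict (Set.Ioc (0:ℝ) (2*π))) :=
      ((Complex.continuous_conj.comp hcontf).mul hEcont).integrableOn_Ioc
    have IRe : (∫ θ in Set.Ioc (0:ℝ) (2*π),
        (((f ((ρ:ℂ) * Complex.exp ((θ:ℂ) * Complex.I))).re : ℝ) : ℂ)
          * Complex.exp (((((-(n:ℤ) : ℤ) : ℝ) * θ : ℝ) : ℂ) * Complex.I))
        = ((π : ℝ) : ℂ) * a n * (ρ:ℂ)^n := by
      have hptw : ∀ θ : ℝ,
          (((f ((ρ:ℂ) * Complex.exp ((θ:ℂ) * Complex.I))).re : ℝ) : ℂ)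
            * Complex.exp (((((-(n:ℤ) : ℤ) : ℝ) * θ : ℝ) : ℂ) * Complex.I)
          = (f ((ρ:ℂ) * Complex.exp ((θ:ℂ) * Complex.I))
                * Complex.exp (((((-(n:ℤ) : ℤ) : ℝ) * θ : ℝ) : ℂ) * Complex.I)
              + (starRingEnd ℂ) (f ((ρ:ℂ) * Complex.exp ((θ:ℂ) * Complex.I)))
                * Complex.exp (((((-(n:ℤ) : ℤ) : ℝ) * θ : ℝ) : ℂ) * Complex.I)) / 2 := by
        intro θ
        rw [← add_mul, Complex.add_conj]
        push_cast
        ring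
      rw [integral_congr_ae (Filter.Eventually.of_forall hptw), integral_div,
        integral_add intfE intcE, I1, Ic, add_zero]
      push_cast
      ring
    have Iexp : (∫ θ in Set.Ioc (0:ℝ) (2*π),
        Complex.exp (((((-(n:ℤ) : ℤ) : ℝ) * θ : ℝ) : ℂ) * Complex.I)) = 0 := by
      have h := circle_exp_integral (-(n:ℤ))
      rw [if_neg (by omega)] at h
      exact h
    have intRe : Integrable (fun θ : ℝ =>
        (((f ((ρ:ℂ) * Complex.exp ((θ:ℂ) * Complex.I))).re : ℝ) : ℂ)
          * Complex.exp (((((-(n:ℤ) : ℤ) : ℝ) * θ : ℝ) : ℂ) * Complex.I))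
        (volume.restrict (Set.Ioc (0:ℝ) (2*π))) :=
      ((Complex.continuous_ofReal.comp (Complex.continuous_re.comp hcontf)).mul
        hEcont).integrableOn_Ioc
    have intE : Integrable (fun θ : ℝ =>
        Complex.exp (((((-(n:ℤ) : ℤ) : ℝ) * θ : ℝ) : ℂ) * Complex.I))
        (volume.restrict (Set.Ioc (0:ℝ) (2*π))) := hEcont.integrableOn_Ioc
    have Efull : (∫ θ in Set.Ioc (0:ℝ) (2*π),
        ((((f ((ρ:ℂ) * Complex.exp ((θ:ℂ) * Complex.I))).re : ℝ) : ℂ) - 1)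
          * Complex.exp (((((-(n:ℤ) : ℤ) : ℝ) * θ : ℝ) : ℂ) * Complex.I))
        = ((π : ℝ) : ℂ) * a n * (ρ:ℂ)^n := by
      have hptw : ∀ θ : ℝ,
          ((((f ((ρ:ℂ) * Complex.exp ((θ:ℂ) * Complex.I))).re : ℝ) : ℂ) - 1)
            * Complex.exp (((((-(n:ℤ) : ℤ) : ℝ) * θ : ℝ) : ℂ) * Complex.I)
          = (((f ((ρ:ℂ) * Complex.exp ((θ:ℂ) * Complex.I))).re : ℝ) : ℂ)
              * Complex.exp (((((-(n:ℤ) : ℤ) : ℝ) * θ : ℝ) : ℂ) * Complex.I)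
            - Complex.exp (((((-(n:ℤ) : ℤ) : ℝ) * θ : ℝ) : ℂ) * Complex.I) := by
        intro θ; ring
      rw [integral_congr_ae (Filter.Eventually.of_forall hptw), integral_sub intRe intE,
        IRe, Iexp, sub_zero]
    -- norm bound
    have hb := norm_integral_le_integral_norm
      (μ := volume.restrict (Set.Ioc (0:ℝ) (2*π)))
      (f := fun θ : ℝ =>
        ((((f ((ρ:ℂ) * Complex.exp ((θ:ℂ) * Complex.I))).re : ℝ) : ℂ) - 1)
          * Complex.exp (((((-(n:ℤ) : ℤ) : ℝ) * θ : ℝ) : ℂ) * Complex.I))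
    rw [Efull] at hb
    have hnval : ∀ θ : ℝ,
        ‖((((f ((ρ:ℂ) * Complex.exp ((θ:ℂ) * Complex.I))).re : ℝ) : ℂ) - 1)
          * Complex.exp (((((-(n:ℤ) : ℤ) : ℝ) * θ : ℝ) : ℂ) * Complex.I)‖
        = 1 - (f ((ρ:ℂ) * Complex.exp ((θ:ℂ) * Complex.I))).re := by
      intro θ
      have h1 : (f ((ρ:ℂ) * Complex.exp ((θ:ℂ) * Complex.I))).re < 1 := hre _ (hmem θ)
      rw [norm_mul]
      have hE1 : ‖Complex.exp (((((-(n:ℤ) : ℤ) : ℝ) * θ : ℝ) : ℂ) * Complex.I)‖ = 1 := by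
        rw [Complex.norm_exp_ofReal_mul_I]
      rw [hE1, mul_one]
      rw [show ((((f ((ρ:ℂ) * Complex.exp ((θ:ℂ) * Complex.I))).re : ℝ) : ℂ) - 1)
          = (((f ((ρ:ℂ) * Complex.exp ((θ:ℂ) * Complex.I))).re - 1 : ℝ) : ℂ) by push_cast; ring]
      rw [Complex.norm_real, Real.norm_eq_abs, abs_of_neg (by linarith)]
      ring
    rw [integral_congr_ae (Filter.Eventually.of_forall hnval)] at hb
    -- compute the right-hand side
    have intf : Integrable (fun θ : ℝ => f ((ρ:ℂ) * Complex.exp ((θ:ℂ) * Complex.I)))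
        (volume.restrict (Set.Ioc (0:ℝ) (2*π))) := hcontf.integrableOn_Ioc
    have intg : Integrable (fun θ : ℝ => (1:ℂ) - f ((ρ:ℂ) * Complex.exp ((θ:ℂ) * Complex.I)))
        (volume.restrict (Set.Ioc (0:ℝ) (2*π))) :=
      (continuous_const.sub hcontf).integrableOn_Ioc
    have hgval : (∫ θ in Set.Ioc (0:ℝ) (2*π),
        ((1:ℂ) - f ((ρ:ℂ) * Complex.exp ((θ:ℂ) * Complex.I))))
        = ((2*π : ℝ) : ℂ) - ((2*π : ℝ) : ℂ) * (a₀ : ℂ) := by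
      rw [integral_sub (integrable_const 1) intf, I0]
      congr 1
      rw [setIntegral_const]
      simp [Real.volume_Ioc, ENNReal.toReal_ofReal (by positivity : (0:ℝ) ≤ 2*π),
        max_eq_left (by positivity : (0:ℝ) ≤ 2*π)]
    have hRre : (∫ θ in Set.Ioc (0:ℝ) (2*π),
        (1 - (f ((ρ:ℂ) * Complex.exp ((θ:ℂ) * Complex.I))).re))
        = 2*π - 2*π*a₀ := by
      have h := integral_re intg (μ := volume.restrict (Set.Ioc (0:ℝ) (2*π)))
      simp only [RCLike.re_to_complex, Complex.sub_re, Complex.one_re] at h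
      rw [h, hgval]
      simp [Complex.sub_re, Complex.mul_re]
    rw [hRre] at hb
    have hlhs : ‖((π : ℝ) : ℂ) * a n * (ρ:ℂ)^n‖ = π * (‖a n‖ * ρ^n) := by
      rw [norm_mul, norm_mul, norm_pow, Complex.norm_real,
        Complex.norm_real, Real.norm_eq_abs, Real.norm_eq_abs, abs_of_pos pi_pos, abs_of_pos hρ0, mul_assoc]
    rw [hlhs] at hb
    nlinarith [pi_pos]
  -- take the limit ρ → 1⁻
  have hcont : Continuous fun ρ : ℝ => ‖a n‖ * ρ^n :=
    continuous_const.mul (continuous_pow n)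
  have htend : Filter.Tendsto (fun ρ : ℝ => ‖a n‖ * ρ^n)
      (nhdsWithin 1 (Set.Iio 1)) (nhds (‖a n‖)) := by
    have h := (hcont.tendsto 1).mono_left
      (nhdsWithin_le_nhds (s := Set.Iio (1:ℝ)))
    simpa using h
  refine le_of_tendsto htend ?_
  filter_upwards [Ioo_mem_nhdsLT_of_mem (by norm_num : (1:ℝ) ∈ Set.Ioc 0 1)] with ρ hρ
  exact main ρ hρ.1 hρ.2

/-- Theorem 4: if `Re f < 1` and `a₀ = f(0) ∈ [0,1)`, then
`a₀ + ∑|aₙ|rⁿ + (1/(1+a₀) + r/(1-r))∑|aₙ|²r^{2n} + (8/9)∑n|aₙ|²r^{2n} ≤ 1`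
for `r ≤ 1/(5-2a₀)`. -/
theorem bohr_P_refined_area (f : ℂ → ℂ) (a : ℕ → ℂ) (a₀ : ℝ)
    (hsum : ∀ z ∈ ball (0 : ℂ) 1, HasSum (fun n => a n * z ^ n) (f z))
    (hre : ∀ z ∈ ball (0 : ℂ) 1, (f z).re < 1)
    (ha0 : a 0 = (a₀ : ℂ)) (h0 : 0 ≤ a₀) (h1 : a₀ < 1)
    (r : ℝ) (hr0 : 0 ≤ r) (hr : r ≤ 1 / (5 - 2 * a₀)) :
    a₀ + ∑' n : ℕ, ‖a (n + 1)‖ * r ^ (n + 1)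
      + (1 / (1 + a₀) + r / (1 - r)) *
          ∑' n : ℕ, ‖a (n + 1)‖ ^ 2 * r ^ (2 * (n + 1))
      + (8 / 9) * ∑' n : ℕ, (n : ℝ) * ‖a n‖ ^ 2 * r ^ (2 * n) ≤ 1 := by
  have key : ∀ n : ℕ, n ≠ 0 → ‖a n‖ ≤ 2 * (1 - a₀) :=
    fun n hn => coeff_bound f a a₀ hsum hre ha0 n hn
  set B : ℝ := 2 * (1 - a₀) with hBdef
  have hB0 : 0 ≤ B := by simp only [hBdef]; linarith
  have h5pos : (0:ℝ) < 5 - 2 * a₀ := by linarith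
  have h5 : r * (5 - 2 * a₀) ≤ 1 := by
    rw [le_div_iff₀ h5pos] at hr; exact hr
  have h3 : 3 * r ≤ 1 := by nlinarith
  have hr1 : r < 1 := by linarith
  have hx0 : 0 ≤ r^2 := sq_nonneg r
  have hx1 : r^2 < 1 := by nlinarith
  -- Sum 1
  have hb1 : ∀ m : ℕ, ‖a (m+1)‖ * r^(m+1) ≤ B * r^(m+1) := fun m =>
    mul_le_mul_of_nonneg_right (key (m+1) (Nat.succ_ne_zero m)) (pow_nonneg hr0 _)
  have sumg1 : Summable (fun m : ℕ => B * r^(m+1)) := by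
    refine ((summable_geometric_of_lt_one hr0 hr1).mul_left (B*r)).congr fun m => ?_
    ring
  have sum1 : Summable (fun m : ℕ => ‖a (m+1)‖ * r^(m+1)) :=
    Summable.of_nonneg_of_le (fun m => by positivity) hb1 sumg1
  have bound1 : (∑' n : ℕ, ‖a (n + 1)‖ * r ^ (n + 1)) ≤ B * r * (1-r)⁻¹ := by
    calc (∑' n : ℕ, ‖a (n + 1)‖ * r ^ (n + 1)) ≤ ∑' m : ℕ, B * r^(m+1) :=
          Summable.tsum_le_tsum hb1 sum1 sumg1
      _ = ∑' m : ℕ, (B*r) * r^m := tsum_congr fun m => by ring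
      _ = (B*r) * ∑' m : ℕ, r^m := tsum_mul_left
      _ = B * r * (1-r)⁻¹ := by rw [tsum_geometric_of_lt_one hr0 hr1]
  -- Sum 2
  have hb2 : ∀ m : ℕ, ‖a (m+1)‖^2 * r^(2*(m+1)) ≤ B^2 * (r^2)^(m+1) := by
    intro m
    rw [pow_mul]
    exact mul_le_mul_of_nonneg_right
      (pow_le_pow_left₀ (norm_nonneg _) (key (m+1) (Nat.succ_ne_zero m)) 2)
      (pow_nonneg hx0 _)
  have sumg2 : Summable (fun m : ℕ => B^2 * (r^2)^(m+1)) := by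
    refine ((summable_geometric_of_lt_one hx0 hx1).mul_left (B^2*r^2)).congr fun m => ?_
    ring
  have sum2 : Summable (fun m : ℕ => ‖a (m+1)‖^2 * r^(2*(m+1))) :=
    Summable.of_nonneg_of_le (fun m => by positivity) hb2 sumg2
  have bound2 : (∑' n : ℕ, ‖a (n + 1)‖^2 * r^(2*(n+1))) ≤ B^2 * (r^2 * (1-r^2)⁻¹) := by
    calc (∑' n : ℕ, ‖a (n + 1)‖^2 * r^(2*(n+1))) ≤ ∑' m : ℕ, B^2 * (r^2)^(m+1) :=
          Summable.tsum_le_tsum hb2 sum2 sumg2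
      _ = ∑' m : ℕ, (B^2*r^2) * (r^2)^m := tsum_congr fun m => by ring
      _ = (B^2*r^2) * ∑' m : ℕ, (r^2)^m := tsum_mul_left
      _ = B^2 * (r^2 * (1-r^2)⁻¹) := by rw [tsum_geometric_of_lt_one hx0 hx1]; ring
  -- Sum 3
  have hxn : ‖r^2‖ < 1 := by rwa [Real.norm_eq_abs, abs_of_nonneg hx0]
  have hb3 : ∀ m : ℕ, (m:ℝ) * ‖a m‖^2 * r^(2*m) ≤ B^2 * ((m:ℝ) * (r^2)^m) := by
    intro m
    rw [pow_mul]
    match m with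
    | 0 => simp
    | (k+1) =>
      have : ‖a (k+1)‖^2 ≤ B^2 :=
        pow_le_pow_left₀ (norm_nonneg _) (key (k+1) (Nat.succ_ne_zero k)) 2
      have hpow : (0:ℝ) ≤ (r^2)^(k+1) := pow_nonneg hx0 _
      nlinarith [Nat.cast_nonneg (α := ℝ) (k+1), mul_le_mul_of_nonneg_right this hpow]
  have sumg3 : Summable (fun m : ℕ => B^2 * ((m:ℝ) * (r^2)^m)) := by
    apply Summable.mul_left
    exact (hasSum_coe_mul_geometric_of_norm_lt_one hxn).summable
  have sum3 : Summable (fun m : ℕ => (m:ℝ) * ‖a m‖^2 * r^(2*m)) :=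
    Summable.of_nonneg_of_le (fun m => by positivity) hb3 sumg3
  have bound3 : (∑' n : ℕ, (n:ℝ) * ‖a n‖^2 * r^(2*n)) ≤ B^2 * (r^2 / (1-r^2)^2) := by
    calc (∑' n : ℕ, (n:ℝ) * ‖a n‖^2 * r^(2*n)) ≤ ∑' m : ℕ, B^2 * ((m:ℝ) * (r^2)^m) :=
          Summable.tsum_le_tsum hb3 sum3 sumg3
      _ = B^2 * ∑' m : ℕ, (m:ℝ) * (r^2)^m := tsum_mul_left
      _ = B^2 * (r^2 / (1-r^2)^2) := by rw [tsum_coe_mul_geometric_of_norm_lt_one hxn]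
  have hc : 0 ≤ 1 / (1 + a₀) + r / (1 - r) := by
    have : (0:ℝ) < 1 - r := by linarith
    positivity
  have := final_ineq a₀ r h0 (le_of_lt h1) hr0 h5
  calc a₀ + (∑' n : ℕ, ‖a (n + 1)‖ * r ^ (n + 1))
      + (1 / (1 + a₀) + r / (1 - r)) * ∑' n : ℕ, ‖a (n + 1)‖ ^ 2 * r ^ (2 * (n + 1))
      + (8 / 9) * ∑' n : ℕ, (n : ℝ) * ‖a n‖ ^ 2 * r ^ (2 * n)
      ≤ a₀ + (B * r * (1-r)⁻¹) + (1 / (1 + a₀) + r / (1 - r)) * (B^2 * (r^2 * (1-r^2)⁻¹))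
        + (8/9) * (B^2 * (r^2 / (1-r^2)^2)) := by
        gcongr
    _ ≤ 1 := by
        have h := final_ineq a₀ r h0 (le_of_lt h1) hr0 h5
        rw [hBdef]
        linarith [h]
end

section
/- If f(z) = \sum_{n=0}^\infty a_{2n} z^{2n} is an even analytic function on the unit disk with |f(z)| \le 1, then \sum_{n=0}^\infty |a_{2n}| r^{2n} + (\frac{1}{1+|a_0|} + \frac{r^2}{1-r^2}) \sum_{n=1}^\infty |a_{2n}|^2 r^{4n} \le 1 for all |z| = r \le 1/\sqrt{3}, and the radius 1/\sqrt{3} is sharp for f(z) = (z^2 - a)/(1 - a z^2), a \in (0,1). -/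
open Metric

noncomputable def Complex.abs : AbsoluteValue ℂ ℝ where
  toFun := fun z => ‖z‖
  map_mul' := norm_mul
  nonneg' := norm_nonneg
  eq_zero' := fun _ => norm_eq_zero
  add_le' := norm_add_le

@[simp] lemma Complex.norm_eq_abs (z : ℂ) : ‖z‖ = Complex.abs z := rfl

lemma Complex.abs_apply (z : ℂ) : Complex.abs z = Real.sqrt (Complex.normSq z) :=
  Complex.norm_def z

@[simp] lemma Complex.abs_ofReal (x : ℝ) : Complex.abs (x : ℂ) = |x| := Complex.norm_real x

@[simp] lemma Complex.abs_natCast (n : ℕ) : Complex.abs (n : ℂ) = n := Complex.norm_natCast n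

@[simp] lemma Complex.abs_conj (z : ℂ) : Complex.abs ((starRingEnd ℂ) z) = Complex.abs z :=
  Complex.norm_conj z

lemma Complex.sq_abs (z : ℂ) : Complex.abs z ^ 2 = Complex.normSq z := Complex.sq_norm z

lemma Complex.abs_exp_ofReal_mul_I (x : ℝ) : Complex.abs (Complex.exp (x * Complex.I)) = 1 :=
  Complex.norm_exp_ofReal_mul_I x

lemma Complex.abs_deriv_le_div_of_mapsTo_ball {f : ℂ → ℂ} {c : ℂ} {R₁ R₂ : ℝ}
    (hd : DifferentiableOn ℂ f (ball c R₁)) (h_maps : Set.MapsTo f (ball c R₁) (ball (f c) R₂))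
    (h₀ : 0 < R₁) : Complex.abs (deriv f c) ≤ R₂ / R₁ :=
  Complex.norm_deriv_le_div_of_mapsTo_ball hd (h_maps.mono_right ball_subset_closedBall) h₀

lemma ebohr_mem_ball {z : ℂ} : z ∈ ball (0:ℂ) 1 ↔ Complex.abs z < 1 := by
  simp [mem_ball, Complex.dist_eq]

/-- absolute summability of coefficients at any radius `< 1`. -/
lemma ebohr_abs_summable {c : ℕ → ℂ}
    (hsum : ∀ w ∈ ball (0:ℂ) 1, Summable (fun n => c n * w ^ n)) :
    ∀ r : ℝ, 0 ≤ r → r < 1 → Summable (fun n => Complex.abs (c n) * r ^ n) := by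
  intro r hr0 hr1
  set ρ : ℝ := (1 + r) / 2 with hρdef
  have hρr : r < ρ := by simp only [hρdef]; linarith
  have hρ1 : ρ < 1 := by simp only [hρdef]; linarith
  have hρ0 : 0 < ρ := by simp only [hρdef]; linarith
  have hmem : (ρ : ℂ) ∈ ball (0:ℂ) 1 := by
    rw [ebohr_mem_ball, Complex.abs_ofReal, abs_of_pos hρ0]; exact hρ1
  have hs := hsum _ hmem
  have htend : Filter.Tendsto (fun n => ‖c n * (ρ:ℂ) ^ n‖) Filter.atTop (nhds 0) := by
    simpa using (hs.tendsto_atTop_zero.norm)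
  obtain ⟨C, hC⟩ := htend.bddAbove_range
  have hCmem : ∀ n : ℕ, Complex.abs (c n) * ρ ^ n ≤ C := by
    intro n
    have := hC (Set.mem_range_self n)
    simpa [Complex.abs_ofReal, abs_of_pos hρ0, mul_pow, abs_of_nonneg hρ0.le] using this
  have hgeo : Summable (fun n : ℕ => C * (r / ρ) ^ n) :=
    (summable_geometric_of_lt_one (by positivity) (by rw [div_lt_one hρ0]; exact hρr)).mul_left C
  refine Summable.of_nonneg_of_le (fun n => by positivity) (fun n => ?_) hgeo
  have h1 : Complex.abs (c n) * r ^ n = (Complex.abs (c n) * ρ ^ n) * (r / ρ) ^ n := by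
    rw [mul_assoc, ← mul_pow]
    congr 2
    field_simp
  rw [h1]
  exact mul_le_mul_of_nonneg_right (hCmem n) (by positivity)

lemma ebohr_hasFP {c : ℕ → ℂ}
    (hs : ∀ r : ℝ, 0 ≤ r → r < 1 → Summable (fun n => Complex.abs (c n) * r ^ n)) :
    HasFPowerSeriesOnBall (fun w => ∑' n, c n * w ^ n)
      (FormalMultilinearSeries.ofScalars ℂ c) 0 1 := by
  have hsum : ∀ y : ℂ, Complex.abs y < 1 → Summable (fun n => c n * y ^ n) := by
    intro y hy
    refine Summable.of_norm ?_
    have := hs (Complex.abs y) (AbsoluteValue.nonneg _ _) hy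
    simpa [Complex.abs_apply, norm_mul, norm_pow] using this
  constructor
  · -- 1 ≤ radius
    refine le_of_forall_lt_imp_le_of_dense fun a ha => ?_
    lift a to NNReal using ha.ne_top with r
    have hr1 : (r : ℝ) < 1 := by exact_mod_cast ha
    refine FormalMultilinearSeries.le_radius_of_summable_norm _ ?_
    have := hs r r.coe_nonneg hr1
    refine this.congr fun n => ?_
    rw [FormalMultilinearSeries.ofScalars_norm, Complex.norm_eq_abs]
  · exact zero_lt_one
  · intro y hy
    have hy' : Complex.abs y < 1 := by
      simpa [edist_dist, Complex.dist_eq, ENNReal.ofReal_lt_one] using hy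
    have h := (hsum y hy').hasSum
    have heq : (fun n => (FormalMultilinearSeries.ofScalars ℂ c n) (fun _ => y))
        = fun n => c n * y ^ n := by
      funext n
      rw [FormalMultilinearSeries.ofScalars_apply_eq, smul_eq_mul]
    rw [heq, zero_add]
    exact h

-- pointwise Möbius inequality
lemma ebohr_mobius {u v : ℂ} (hu : Complex.abs u ≤ 1) (hv : Complex.abs v ≤ 1) :
    Complex.abs (u - v) ≤ Complex.abs (1 - (starRingEnd ℂ) v * u) := by
  have hu' : Complex.normSq u ≤ 1 := by
    rw [← Complex.sq_abs]; nlinarith [Complex.abs.nonneg u]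
  have hv' : Complex.normSq v ≤ 1 := by
    rw [← Complex.sq_abs]; nlinarith [Complex.abs.nonneg v]
  rw [Complex.abs_apply, Complex.abs_apply]
  apply Real.sqrt_le_sqrt
  simp only [Complex.normSq_apply, Complex.sub_re, Complex.sub_im, Complex.mul_re,
    Complex.mul_im, Complex.one_re, Complex.one_im, Complex.conj_re, Complex.conj_im] at *
  nlinarith [mul_nonneg (sub_nonneg.2 hu') (sub_nonneg.2 hv')]

lemma ebohr_coeff_one {c : ℕ → ℂ}
    (hs : ∀ r : ℝ, 0 ≤ r → r < 1 → Summable (fun n => Complex.abs (c n) * r ^ n))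
    (hb : ∀ w ∈ ball (0:ℂ) 1, Complex.abs (∑' n, c n * w ^ n) ≤ 1) :
    Complex.abs (c 1) ≤ 1 - Complex.abs (c 0) ^ 2 := by
  set F : ℂ → ℂ := fun w => ∑' n, c n * w ^ n with hFdef
  have hps := ebohr_hasFP hs
  have hball : EMetric.ball (0:ℂ) 1 = ball (0:ℂ) 1 := by
    rw [← ENNReal.ofReal_one]; exact Metric.eball_ofReal
  have hdiff : DifferentiableOn ℂ F (ball (0:ℂ) 1) := by
    rw [← hball]
    exact hps.differentiableOn
  have hF0 : F 0 = c 0 := by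
    have h := tsum_eq_single (L := SummationFilter.unconditional ℕ) (f := fun n => c n * (0:ℂ) ^ n) 0
      (fun n hn => by simp [zero_pow hn])
    simpa using h
  have hderiv : deriv F 0 = c 1 := by
    have h := hps.hasFPowerSeriesAt.deriv
    rw [h]
    have hco : (FormalMultilinearSeries.ofScalars ℂ c) 1 (fun _ => (1:ℂ)) = c 1 := by
      rw [FormalMultilinearSeries.ofScalars_apply_eq]; simp
    exact hco
  have h0mem : (0:ℂ) ∈ ball (0:ℂ) 1 := mem_ball_self one_pos
  have ha0 : Complex.abs (c 0) ≤ 1 := by rw [← hF0]; exact hb 0 h0mem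
  rcases eq_or_lt_of_le ha0 with hae | halt
  · -- |c 0| = 1 : maximum modulus, F constant, c 1 = 0
    have hmax : IsMaxOn (norm ∘ F) (ball (0:ℂ) 1) 0 := by
      intro z hz
      simp only [Function.comp_apply, Set.mem_setOf_eq, Complex.norm_eq_abs, hF0, hae]
      exact hb z hz
    have heq := Complex.eqOn_of_isPreconnected_of_isMaxOn_norm
      (convex_ball (0:ℂ) 1).isPreconnected isOpen_ball hdiff h0mem hmax
    have hev : F =ᶠ[nhds 0] fun _ => F 0 := by
      filter_upwards [isOpen_ball.mem_nhds h0mem] with z hz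
      exact heq hz
    have : deriv F 0 = 0 := by
      rw [hev.deriv_eq]; exact deriv_const _ _
    rw [hderiv] at this
    rw [this, map_zero, hae]
    norm_num
  · -- |c 0| < 1
    set k : ℂ := (starRingEnd ℂ) (c 0) with hk
    have hden : ∀ w ∈ ball (0:ℂ) 1, (1 : ℂ) - k * F w ≠ 0 := by
      intro w hw h
      have h1 : Complex.abs (k * F w) < 1 := by
        rw [map_mul]
        calc Complex.abs k * Complex.abs (F w)
            ≤ Complex.abs (c 0) * 1 := by
              apply mul_le_mul _ (hb w hw) (Complex.abs.nonneg _) (Complex.abs.nonneg _)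
              simp [hk]
          _ < 1 := by rw [mul_one]; exact halt
      rw [← sub_eq_zero.mp h] at h1
      simp at h1
    set φ : ℂ → ℂ := fun w => (F w - c 0) / (1 - k * F w) with hφdef
    have hφb : ∀ w ∈ ball (0:ℂ) 1, Complex.abs (φ w) ≤ 1 := by
      intro w hw
      rw [hφdef]
      simp only [map_div₀]
      rw [div_le_one (by
        have := Complex.abs.nonneg (1 - k * F w)
        rcases this.lt_or_eq with h | h
        · exact h
        · exact absurd (Complex.abs.eq_zero.1 h.symm) (hden w hw))]
      exact le_trans (ebohr_mobius (hb w hw) ha0) (le_of_eq rfl)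
    have hφd : DifferentiableOn ℂ φ (ball (0:ℂ) 1) := by
      apply DifferentiableOn.div
      · exact hdiff.sub_const _
      · exact (differentiableOn_const _).sub ((differentiableOn_const _).mul hdiff)
      · exact hden
    have hφ0 : φ 0 = 0 := by
      rw [hφdef]; simp [hF0]
    -- Schwarz lemma
    have hFd0 : DifferentiableAt ℂ F 0 :=
      (hdiff.differentiableAt (isOpen_ball.mem_nhds h0mem))
    have hFda : HasDerivAt F (c 1) 0 := by
      have := hFd0.hasDerivAt
      rwa [hderiv] at this
    have hden0 : (1:ℂ) - k * c 0 ≠ 0 := by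
      have := hden 0 h0mem
      rwa [hF0] at this
    have hφda : HasDerivAt φ ((c 1 * (1 - k * F 0) - (F 0 - c 0) * (-(k * c 1))) /
        (1 - k * F 0) ^ 2) 0 := by
      have hnum : HasDerivAt (fun w => F w - c 0) (c 1) 0 := hFda.sub_const _
      have hden' : HasDerivAt (fun w => (1:ℂ) - k * F w) (-(k * c 1)) 0 :=
        (hFda.const_mul k).const_sub 1
      exact hnum.div hden' (by rwa [hF0])
    have hφderiv : deriv φ 0 = c 1 / (1 - k * c 0) := by
      rw [hφda.deriv, hF0]
      field_simp [hden0]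
      ring
    have hsch : ∀ ε : ℝ, 0 < ε → Complex.abs (deriv φ 0) ≤ 1 + ε := by
      intro ε hε
      have hmaps : Set.MapsTo φ (ball (0:ℂ) 1) (ball (φ 0) (1 + ε)) := by
        intro w hw
        rw [hφ0, mem_ball, Complex.dist_eq, sub_zero]
        exact lt_of_le_of_lt (hφb w hw) (by linarith)
      have := Complex.abs_deriv_le_div_of_mapsTo_ball hφd hmaps one_pos
      simpa using this
    have hd1 : Complex.abs (deriv φ 0) ≤ 1 := by
      by_contra h
      push_neg at h
      have := hsch ((Complex.abs (deriv φ 0) - 1) / 2) (by linarith)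
      linarith
    rw [hφderiv, map_div₀] at hd1
    have hkc : k * c 0 = (Complex.normSq (c 0) : ℂ) := by
      rw [hk, mul_comm, Complex.mul_conj]
    have habs : Complex.abs (1 - k * c 0) = 1 - Complex.abs (c 0) ^ 2 := by
      rw [hkc]
      have : ((1:ℂ) - (Complex.normSq (c 0) : ℂ)) = ((1 - Complex.normSq (c 0) : ℝ) : ℂ) := by
        push_cast; ring
      rw [this, Complex.abs_ofReal, abs_of_nonneg, Complex.sq_abs]
      nlinarith [Complex.sq_abs (c 0), Complex.abs.nonneg (c 0)]
    rw [habs] at hd1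
    have hpos : 0 < 1 - Complex.abs (c 0) ^ 2 := by nlinarith [Complex.abs.nonneg (c 0)]
    rw [div_le_one hpos] at hd1
    linarith



lemma ebohr_rootsum {N : ℕ} (hN : 0 < N) (m : ℕ) :
    ∑ k ∈ Finset.range N, (Complex.exp (2 * Real.pi * Complex.I / N) ^ m) ^ k
      = if N ∣ m then (N : ℂ) else 0 := by
  set ζ : ℂ := Complex.exp (2 * Real.pi * Complex.I / N) with hζ
  have hNC : (N:ℂ) ≠ 0 := Nat.cast_ne_zero.2 hN.ne'
  have hζm : ζ ^ m = Complex.exp ((m : ℂ) * (2 * Real.pi * Complex.I) / N) := by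
    rw [hζ, ← Complex.exp_nat_mul]
    ring_nf
  by_cases hdvd : N ∣ m
  · obtain ⟨j, rfl⟩ := hdvd
    have h1 : ζ ^ (N * j) = 1 := by
      rw [hζm]
      have harg : ((N * j : ℕ) : ℂ) * (2 * Real.pi * Complex.I) / N
          = ((j : ℤ) : ℂ) * (2 * Real.pi * Complex.I) := by
        push_cast
        field_simp
      rw [harg]
      exact Complex.exp_int_mul_two_pi_mul_I j
    rw [h1, if_pos ⟨j, rfl⟩]
    simp
  · have hxN : (ζ ^ m) ^ N = 1 := by
      rw [hζm, ← Complex.exp_nat_mul]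
      have harg : (N : ℂ) * ((m : ℂ) * (2 * Real.pi * Complex.I) / N)
          = ((m : ℤ) : ℂ) * (2 * Real.pi * Complex.I) := by
        push_cast
        field_simp
      rw [harg]
      exact Complex.exp_int_mul_two_pi_mul_I m
    have hx1 : ζ ^ m ≠ 1 := by
      intro h
      rw [hζm, Complex.exp_eq_one_iff] at h
      obtain ⟨n, hn⟩ := h
      have hne : (2 * (Real.pi:ℂ) * Complex.I) ≠ 0 := by
        simp [Real.pi_ne_zero, Complex.I_ne_zero]
      have h2 : (m : ℂ) = (n : ℂ) * N := by
        field_simp at hn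
        apply mul_right_cancel₀ hne
        linear_combination (2 * (Real.pi:ℂ) * Complex.I) * hn
      have h3 : (m : ℤ) = n * N := by exact_mod_cast h2
      exact hdvd (Int.natCast_dvd_natCast.mp ⟨n, by rw [h3]; ring⟩)
    rw [geom_sum_eq hx1, hxN]
    simp [hdvd]

lemma ebohr_wiener {c : ℕ → ℂ}
    (hsum : ∀ w ∈ ball (0:ℂ) 1, Summable (fun n => c n * w ^ n))
    (hb : ∀ w ∈ ball (0:ℂ) 1, Complex.abs (∑' n, c n * w ^ n) ≤ 1)
    {N : ℕ} (hN : 0 < N) :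
    Complex.abs (c N) ≤ 1 - Complex.abs (c 0) ^ 2 := by
  have habs := ebohr_abs_summable hsum
  have hinj : Function.Injective (fun j : ℕ => N * j) :=
    fun a b hab => Nat.eq_of_mul_eq_mul_left hN hab
  set d : ℕ → ℂ := fun j => c (N * j) with hd
  -- summability of the d-coefficients
  have hsd : ∀ r : ℝ, 0 ≤ r → r < 1 → Summable (fun j => Complex.abs (d j) * r ^ j) := by
    intro r hr0 hr1
    set s : ℝ := r ^ ((N:ℝ)⁻¹) with hsdef
    have hNR : ((N:ℝ))⁻¹ ≠ 0 := by positivity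
    have hs0 : 0 ≤ s := Real.rpow_nonneg hr0 _
    have hs1 : s < 1 := by
      rcases eq_or_lt_of_le hr0 with h0 | h0
      · rw [hsdef, ← h0, Real.zero_rpow hNR]; norm_num
      · exact Real.rpow_lt_one hr0 hr1 (by positivity)
    have hsN : s ^ N = r := by
      rw [hsdef, ← Real.rpow_natCast (r ^ ((N:ℝ)⁻¹)) N, ← Real.rpow_mul hr0]
      rw [inv_mul_cancel₀ (by exact_mod_cast hN.ne'), Real.rpow_one]
    have h1 := habs s hs0 hs1
    have h2 := h1.comp_injective hinj
    refine h2.congr fun j => ?_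
    simp only [Function.comp_apply, hd]
    rw [pow_mul, hsN]
  -- boundedness for d
  have hbd : ∀ w ∈ ball (0:ℂ) 1, Complex.abs (∑' j, d j * w ^ j) ≤ 1 := by
    intro w hw
    obtain ⟨z, hzN⟩ := IsAlgClosed.exists_pow_nat_eq w hN
    have hwz : Complex.abs w = Complex.abs z ^ N := by rw [← hzN, map_pow]
    have hw1 : Complex.abs w < 1 := ebohr_mem_ball.1 hw
    have hz1 : Complex.abs z < 1 := by
      by_contra h
      push_neg at h
      have := one_le_pow₀ (n := N) h
      rw [← hwz] at this
      linarith
    set ζ : ℂ := Complex.exp (2 * Real.pi * Complex.I / N) with hζ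
    have hζabs : Complex.abs ζ = 1 := by
      have : 2 * Real.pi * Complex.I / N = ((2 * Real.pi / N : ℝ) : ℂ) * Complex.I := by
        push_cast; ring
      rw [hζ, this, Complex.abs_exp_ofReal_mul_I]
    have hmem : ∀ k : ℕ, ζ ^ k * z ∈ ball (0:ℂ) 1 := by
      intro k
      rw [ebohr_mem_ball, map_mul, map_pow, hζabs, one_pow, one_mul]
      exact hz1
    have hsummand : ∀ k : ℕ, Summable (fun m => c m * (ζ ^ k * z) ^ m) :=
      fun k => hsum _ (hmem k)
    set f : ℕ → ℂ := fun m => (if N ∣ m then (N:ℂ) else 0) * (c m * z ^ m) with hf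
    have hswap : ∑ k ∈ Finset.range N, ∑' m, c m * (ζ ^ k * z) ^ m = ∑' m, f m := by
      rw [← Summable.tsum_finsetSum (fun k _ => hsummand k)]
      apply tsum_congr
      intro m
      have hpt : ∀ k, c m * (ζ ^ k * z) ^ m = (ζ ^ m) ^ k * (c m * z ^ m) := by
        intro k
        rw [mul_pow, pow_right_comm]
        ring
      rw [Finset.sum_congr rfl (fun k _ => hpt k), ← Finset.sum_mul, hf]
      rw [ebohr_rootsum hN m]
    have hsupp : Function.support f ⊆ Set.range (fun j : ℕ => N * j) := by
      intro m hm
      rw [Function.mem_support, hf] at hm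
      by_cases hdvd : N ∣ m
      · obtain ⟨j, rfl⟩ := hdvd
        exact ⟨j, rfl⟩
      · simp [hdvd] at hm
    have hre := hinj.tsum_eq (f := f) hsupp
    have hfj : ∀ j : ℕ, f (N * j) = (N : ℂ) * (d j * w ^ j) := by
      intro j
      rw [hf]
      simp only [hd]
      rw [if_pos ⟨j, rfl⟩, pow_mul, hzN]
    have hchain : (N : ℂ) * ∑' j, d j * w ^ j
        = ∑ k ∈ Finset.range N, ∑' m, c m * (ζ ^ k * z) ^ m := by
      rw [hswap, ← hre]
      rw [← tsum_mul_left]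
      exact tsum_congr fun j => (hfj j).symm
    have habs2 : (N : ℝ) * Complex.abs (∑' j, d j * w ^ j) ≤ N := by
      have h1 : Complex.abs ((N:ℂ) * ∑' j, d j * w ^ j) ≤ N := by
        rw [hchain]
        calc Complex.abs (∑ k ∈ Finset.range N, ∑' m, c m * (ζ ^ k * z) ^ m)
            ≤ ∑ k ∈ Finset.range N, Complex.abs (∑' m, c m * (ζ ^ k * z) ^ m) := by
              exact Complex.abs.sum_le _ _
          _ ≤ ∑ k ∈ Finset.range N, 1 := Finset.sum_le_sum fun k _ => hb _ (hmem k)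
          _ = N := by simp
      rwa [map_mul, Complex.abs_natCast] at h1
    have hNpos : (0:ℝ) < N := by exact_mod_cast hN
    nlinarith [Complex.abs.nonneg (∑' j, d j * w ^ j)]
  have := ebohr_coeff_one hsd hbd
  simpa [hd] using this

set_option maxHeartbeats 1000000 in
lemma ebohr_part1 (f : ℂ → ℂ) (a : ℕ → ℂ)
    (hf : ∀ z ∈ ball (0 : ℂ) 1, HasSum (fun n => a n * z ^ (2 * n)) (f z))
    (hbf : ∀ z ∈ ball (0 : ℂ) 1, Complex.abs (f z) ≤ 1)
    (r : ℝ) (hr0 : 0 ≤ r) (hr : r ≤ 1 / Real.sqrt 3) :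
    ∑' n : ℕ, Complex.abs (a n) * r ^ (2 * n)
      + (1 / (1 + Complex.abs (a 0)) + r ^ 2 / (1 - r ^ 2)) *
          ∑' n : ℕ, Complex.abs (a (n + 1)) ^ 2 * r ^ (4 * (n + 1)) ≤ 1 := by
  have hsq3 : (1:ℝ) < Real.sqrt 3 := by
    have h3 := Real.sq_sqrt (by norm_num : (0:ℝ) ≤ 3)
    have h4 := Real.sqrt_nonneg 3
    nlinarith
  have hrlt1 : r < 1 := lt_of_le_of_lt hr (by rw [div_lt_one (by linarith)]; exact hsq3)
  have hρ13 : r ^ 2 ≤ 1/3 := by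
    have h1 := pow_le_pow_left₀ hr0 hr 2
    rw [div_pow, one_pow, Real.sq_sqrt (by norm_num : (0:ℝ) ≤ 3)] at h1
    linarith
  have hρ0 : 0 ≤ r^2 := sq_nonneg r
  -- the even coefficients as a power series in w
  have hkey : ∀ w ∈ ball (0:ℂ) 1, ∃ z ∈ ball (0:ℂ) 1,
      HasSum (fun n => a n * w ^ n) (f z) := by
    intro w hw
    obtain ⟨z, hz2⟩ := IsAlgClosed.exists_pow_nat_eq w (by norm_num : 0 < 2)
    have hzb : z ∈ ball (0:ℂ) 1 := by
      rw [ebohr_mem_ball]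
      by_contra h
      push_neg at h
      have h2 : (1:ℝ) ≤ Complex.abs z ^ 2 := one_le_pow₀ h
      rw [← map_pow, hz2] at h2
      have := ebohr_mem_ball.1 hw
      linarith
    refine ⟨z, hzb, ?_⟩
    have := hf z hzb
    refine this.congr_fun fun n => ?_
    rw [pow_mul, hz2]
  have hsum_a : ∀ w ∈ ball (0:ℂ) 1, Summable (fun n => a n * w ^ n) := by
    intro w hw
    obtain ⟨z, _, hz⟩ := hkey w hw
    exact hz.summable
  have hb_a : ∀ w ∈ ball (0:ℂ) 1, Complex.abs (∑' n, a n * w ^ n) ≤ 1 := by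
    intro w hw
    obtain ⟨z, hzb, hz⟩ := hkey w hw
    rw [hz.tsum_eq]
    exact hbf z hzb
  have hW : ∀ n : ℕ, Complex.abs (a (n+1)) ≤ 1 - Complex.abs (a 0) ^ 2 :=
    fun n => ebohr_wiener hsum_a hb_a (Nat.succ_pos n)
  have hA1 : Complex.abs (a 0) ≤ 1 := by
    have h0 : (0:ℂ) ∈ ball (0:ℂ) 1 := mem_ball_self one_pos
    have h1 := hf 0 h0
    have h2 : HasSum (fun n => a n * (0:ℂ) ^ (2 * n)) (a 0) := by
      have := hasSum_single (f := fun n => a n * (0:ℂ) ^ (2 * n)) 0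
        (fun n hn => by simp [zero_pow (by omega : 2 * n ≠ 0)])
      simpa using this
    have h3 : f 0 = a 0 := h1.unique h2
    have := hbf 0 h0
    rwa [h3] at this
  set A := Complex.abs (a 0) with hA
  have hA0 : 0 ≤ A := Complex.abs.nonneg _
  set c : ℝ := 1 - A^2 with hc
  have hc0 : 0 ≤ c := by nlinarith
  -- summability of the first series
  have hsum1 : Summable (fun n => Complex.abs (a n) * r ^ (2*n)) := by
    have := ebohr_abs_summable hsum_a (r^2) hρ0 (by nlinarith)
    refine this.congr fun n => ?_
    rw [← pow_mul]
  have hsum1' : Summable (fun n => Complex.abs (a (n+1)) * r ^ (2*(n+1))) := by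
    have := (summable_nat_add_iff 1).2 hsum1
    exact this
  have hgeo3 : Summable (fun n : ℕ => c * (1/3:ℝ)^(n+1)) := by
    apply Summable.mul_left
    exact (summable_geometric_of_lt_one (by norm_num) (by norm_num)).comp_injective
      (add_left_injective 1)
  have htail : ∑' n, Complex.abs (a (n+1)) * r ^ (2*(n+1)) ≤ ∑' n : ℕ, c * (1/3:ℝ)^(n+1) := by
    refine Summable.tsum_le_tsum (fun n => ?_) hsum1' hgeo3
    have h1 : r ^ (2*(n+1)) ≤ (1/3:ℝ)^(n+1) := by
      rw [pow_mul]
      exact pow_le_pow_left₀ hρ0 hρ13 (n+1)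
    exact mul_le_mul (hW n) h1 (by positivity) hc0
  have hgeo3' : ∑' n : ℕ, c * (1/3:ℝ)^(n+1) = c * (1/2) := by
    rw [tsum_mul_left]
    have h1 : ∑' n : ℕ, (1/3:ℝ)^(n+1) = 1/2 := by
      have h2 : ∀ n : ℕ, (1/3:ℝ)^(n+1) = (1/3) * (1/3)^n := fun n => pow_succ' _ _
      rw [tsum_congr h2, tsum_mul_left, tsum_geometric_of_lt_one (by norm_num) (by norm_num)]
      norm_num
    rw [h1]
  have hS1 : ∑' n : ℕ, Complex.abs (a n) * r ^ (2 * n) ≤ A + c * (1/2) := by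
    rw [Summable.tsum_eq_zero_add hsum1]
    have h0 : Complex.abs (a 0) * r ^ (2*0) = A := by norm_num [hA]
    rw [h0]
    have := htail.trans (le_of_eq hgeo3')
    linarith
  -- second series
  have hgeo9 : Summable (fun n : ℕ => c^2 * (1/9:ℝ)^(n+1)) := by
    apply Summable.mul_left
    exact (summable_geometric_of_lt_one (by norm_num) (by norm_num)).comp_injective
      (add_left_injective 1)
  have hterm2 : ∀ n : ℕ, Complex.abs (a (n+1))^2 * r ^ (4*(n+1)) ≤ c^2 * (1/9:ℝ)^(n+1) := by
    intro n
    have h1 : r ^ (4*(n+1)) ≤ (1/9:ℝ)^(n+1) := by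
      have h2 : r ^ (4*(n+1)) = (r^4)^(n+1) := by rw [← pow_mul]
      rw [h2]
      refine pow_le_pow_left₀ (by positivity) ?_ (n+1)
      nlinarith
    have h3 : Complex.abs (a (n+1))^2 ≤ c^2 := by
      have := hW n
      nlinarith [Complex.abs.nonneg (a (n+1))]
    exact mul_le_mul h3 h1 (by positivity) (by positivity)
  have hsum2 : Summable (fun n => Complex.abs (a (n+1))^2 * r ^ (4*(n+1))) :=
    Summable.of_nonneg_of_le (fun n => by positivity) hterm2 hgeo9
  have hgeo9' : ∑' n : ℕ, c^2 * (1/9:ℝ)^(n+1) = c^2 * (1/8) := by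
    rw [tsum_mul_left]
    have h1 : ∑' n : ℕ, (1/9:ℝ)^(n+1) = 1/8 := by
      have h2 : ∀ n : ℕ, (1/9:ℝ)^(n+1) = (1/9) * (1/9)^n := fun n => pow_succ' _ _
      rw [tsum_congr h2, tsum_mul_left, tsum_geometric_of_lt_one (by norm_num) (by norm_num)]
      norm_num
    rw [h1]
  have hS2 : ∑' n : ℕ, Complex.abs (a (n+1))^2 * r ^ (4*(n+1)) ≤ c^2 * (1/8) := by
    have := Summable.tsum_le_tsum hterm2 hsum2 hgeo9
    rwa [hgeo9'] at this
  have hS2pos : 0 ≤ ∑' n : ℕ, Complex.abs (a (n+1))^2 * r ^ (4*(n+1)) :=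
    tsum_nonneg fun n => by positivity
  -- the factor K
  have hdenpos : (0:ℝ) < 1 + A := by linarith
  have hKle : 1 / (1 + A) + r^2/(1-r^2) ≤ 1/(1+A) + 1/2 := by
    have h1 : r^2/(1-r^2) ≤ 1/2 := by
      rw [div_le_iff₀ (by nlinarith)]
      nlinarith
    linarith
  have hK0 : 0 ≤ 1 / (1 + A) + r^2/(1-r^2) := by
    have h1 : 0 ≤ 1/(1+A) := by positivity
    have h2 : 0 ≤ r^2/(1-r^2) := by
      apply div_nonneg hρ0
      nlinarith
    linarith
  have hKb0 : 0 ≤ 1/(1+A) + 1/2 := by positivity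
  have hKS2 : (1 / (1 + A) + r^2/(1-r^2)) * ∑' n : ℕ, Complex.abs (a (n+1))^2 * r ^ (4*(n+1))
      ≤ (1/(1+A) + 1/2) * (c^2 * (1/8)) :=
    mul_le_mul hKle hS2 hS2pos hKb0
  -- final scalar inequality
  have hid : A + c * (1/2) + (1/(1+A) + 1/2)*(c^2 * (1/8))
      = 1 - (1-A)^3*(A+5)/(16) := by
    rw [hc]
    have hne : (1+A) ≠ 0 := hdenpos.ne'
    field_simp
    ring
  have hfin : A + c * (1/2) + (1/(1+A) + 1/2)*(c^2 * (1/8)) ≤ 1 := by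
    rw [hid]
    have : 0 ≤ (1-A)^3*(A+5)/16 := by
      apply div_nonneg _ (by norm_num)
      apply mul_nonneg (by nlinarith) (by linarith)
    linarith
  calc ∑' n : ℕ, Complex.abs (a n) * r ^ (2 * n)
      + (1 / (1 + Complex.abs (a 0)) + r ^ 2 / (1 - r ^ 2)) *
          ∑' n : ℕ, Complex.abs (a (n + 1)) ^ 2 * r ^ (4 * (n + 1))
      ≤ (A + c * (1/2)) + (1/(1+A) + 1/2) * (c^2 * (1/8)) := by
        exact add_le_add hS1 hKS2
    _ ≤ 1 := hfin

set_option maxHeartbeats 1000000 in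
lemma ebohr_part2 (r : ℝ) (hr1 : 1 / Real.sqrt 3 < r) (hr2 : r < 1) :
    ∃ t : ℝ, 0 < t ∧ t < 1 ∧ ∃ b : ℕ → ℂ,
      (∀ z ∈ ball (0 : ℂ) 1,
        HasSum (fun n => b n * z ^ (2 * n)) ((z ^ 2 - (t : ℂ)) / (1 - (t : ℂ) * z ^ 2))) ∧
      1 < ∑' n : ℕ, Complex.abs (b n) * r ^ (2 * n)
        + (1 / (1 + Complex.abs (b 0)) + r ^ 2 / (1 - r ^ 2)) *
            ∑' n : ℕ, Complex.abs (b (n + 1)) ^ 2 * r ^ (4 * (n + 1)) := by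
  have hsq3 : (0:ℝ) < Real.sqrt 3 := Real.sqrt_pos.2 (by norm_num)
  have hr0 : 0 < r := lt_trans (by positivity) hr1
  have hρ3 : 1/3 < r^2 := by
    have h1 : (1 / Real.sqrt 3)^2 < r^2 := by
      apply pow_lt_pow_left₀ hr1 (by positivity)
      norm_num
    rw [div_pow, one_pow, Real.sq_sqrt (by norm_num : (0:ℝ) ≤ 3)] at h1
    exact h1
  have hρ1 : r^2 < 1 := by nlinarith
  have hρ0 : 0 < r^2 := by positivity
  set ρ : ℝ := r^2 with hρdef
  set t : ℝ := ((1-ρ)/(2*ρ) + 1)/2 with ht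
  have hq0 : 0 < (1-ρ)/(2*ρ) := by
    apply div_pos (by linarith) (by linarith)
  have hq1 : (1-ρ)/(2*ρ) < 1 := by
    rw [div_lt_one (by linarith)]
    linarith
  have ht0 : 0 < t := by rw [ht]; linarith
  have ht1 : t < 1 := by rw [ht]; linarith
  have h2tρ : 2*t*ρ = (1-ρ)/2 + ρ := by
    rw [ht]
    field_simp
  have htρ1 : t*ρ < 1 := by nlinarith
  have htρ0 : 0 ≤ t*ρ := by positivity
  refine ⟨t, ht0, ht1, ?_⟩
  set b : ℕ → ℂ := fun n => Nat.casesOn n (-(t:ℂ)) (fun m => (1 - (t:ℂ)^2) * (t:ℂ)^m) with hb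
  have hb0 : b 0 = -(t:ℂ) := rfl
  have hbs : ∀ m : ℕ, b (m+1) = (1 - (t:ℂ)^2) * (t:ℂ)^m := fun m => rfl
  refine ⟨b, ?_, ?_⟩
  · -- HasSum
    intro z hz
    have hz1 : Complex.abs z < 1 := ebohr_mem_ball.1 hz
    set u : ℂ := (t:ℂ) * z^2 with hu
    have hu1 : ‖u‖ < 1 := by
      rw [hu, Complex.norm_eq_abs, map_mul, map_pow, Complex.abs_ofReal, abs_of_pos ht0]
      nlinarith [Complex.abs.nonneg z]
    have hden : (1:ℂ) - (t:ℂ)*z^2 ≠ 0 := by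
      intro h
      have h1 : u = 1 := by rw [hu]; linear_combination -h
      rw [h1] at hu1
      simp at hu1
    have hgeo := hasSum_geometric_of_norm_lt_one hu1
    have h1 := hgeo.mul_left ((1 - (t:ℂ)^2) * z^2)
    have h2 : HasSum (fun n => b (n+1) * z ^ (2*(n+1))) ((1 - (t:ℂ)^2) * z^2 * (1-u)⁻¹) := by
      refine h1.congr_fun fun n => ?_
      rw [hbs, hu, mul_pow, ← pow_mul]
      ring
    have h3 := (hasSum_nat_add_iff (f := fun n => b n * z^(2*n)) 1).1 h2
    have h4 : ((1 - (t:ℂ)^2) * z^2 * (1-u)⁻¹ + ∑ i ∈ Finset.range 1, b i * z^(2*i)) =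
        (z^2 - (t:ℂ))/(1 - (t:ℂ)*z^2) := by
      rw [Finset.sum_range_one]
      rw [hb0, hu]
      have h5 : ((1:ℂ) - (t:ℂ)*z^2)⁻¹ = 1/((1:ℂ) - (t:ℂ)*z^2) := by rw [one_div]
      field_simp
      ring
    rwa [h4] at h3
  · -- numeric inequality
    have habs_b0 : Complex.abs (b 0) = t := by
      rw [hb0, show -(t:ℂ) = ((-t : ℝ) : ℂ) by push_cast; ring, Complex.abs_ofReal,
        abs_neg, abs_of_pos ht0]
    have habs_bs : ∀ n : ℕ, Complex.abs (b (n+1)) = (1-t^2) * t^n := by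
      intro n
      rw [hbs, show (1 - (t:ℂ)^2) * (t:ℂ)^n = (((1-t^2)*t^n : ℝ) : ℂ) by push_cast; ring,
        Complex.abs_ofReal, abs_of_nonneg (mul_nonneg (by nlinarith) (pow_nonneg ht0.le n))]
    have hct : ∀ n : ℕ, Complex.abs (b (n+1)) * r^(2*(n+1)) = ((1-t^2)*ρ) * (t*ρ)^n := by
      intro n
      rw [habs_bs, pow_mul, mul_pow]
      ring
    have hgeo := summable_geometric_of_lt_one htρ0 htρ1
    have hsumtail : Summable (fun n => Complex.abs (b (n+1)) * r^(2*(n+1))) :=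
      (hgeo.mul_left ((1-t^2)*ρ)).congr (fun n => (hct n).symm)
    have hsumT1 : Summable (fun n => Complex.abs (b n) * r^(2*n)) :=
      (summable_nat_add_iff 1).1 hsumtail
    have htail : ∑' n, Complex.abs (b (n+1)) * r^(2*(n+1)) = ((1-t^2)*ρ) * (1 - t*ρ)⁻¹ := by
      rw [tsum_congr hct, tsum_mul_left, tsum_geometric_of_lt_one htρ0 htρ1]
    have hT1 : ∑' n, Complex.abs (b n) * r^(2*n) = t + ((1-t^2)*ρ) * (1 - t*ρ)⁻¹ := by
      rw [Summable.tsum_eq_zero_add hsumT1]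
      rw [show (2*0 : ℕ) = 0 by norm_num, pow_zero, mul_one, habs_b0]
      rw [htail]
    have hd : 0 < 1 - t*ρ := by linarith
    have h1T1 : 1 < t + ((1-t^2)*ρ) * (1 - t*ρ)⁻¹ := by
      have h6 : ((1-t^2)*ρ) * (1 - t*ρ)⁻¹ = ((1-t^2)*ρ) / (1 - t*ρ) := by
        rw [div_eq_mul_inv]
      rw [h6]
      have h7 : (1-t) < ((1-t^2)*ρ) / (1 - t*ρ) := by
        rw [lt_div_iff₀ hd]
        nlinarith [mul_pos (sub_pos.2 ht1) (show (0:ℝ) < ρ + 2*t*ρ - 1 by nlinarith)]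
      linarith
    have hK0 : 0 ≤ 1 / (1 + Complex.abs (b 0)) + r ^ 2 / (1 - r ^ 2) := by
      have h8 : 0 ≤ 1 / (1 + Complex.abs (b 0)) := by positivity
      have h9 : 0 ≤ r^2 / (1 - r^2) := div_nonneg (by positivity) (by linarith)
      linarith
    have hT2 : 0 ≤ ∑' n : ℕ, Complex.abs (b (n + 1)) ^ 2 * r ^ (4 * (n + 1)) :=
      tsum_nonneg fun n => by positivity
    have := mul_nonneg hK0 hT2
    calc (1:ℝ) < t + ((1-t^2)*ρ) * (1 - t*ρ)⁻¹ := h1T1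
      _ = ∑' n, Complex.abs (b n) * r^(2*n) := hT1.symm
      _ ≤ _ := by linarith


/-- Refined Bohr inequality for even bounded analytic functions, radius `1/√3`,
sharp for `f(z) = (z²-a)/(1-az²)`. -/
theorem even_refined_bohr :
    (∀ (f : ℂ → ℂ) (a : ℕ → ℂ),
      (∀ z ∈ ball (0 : ℂ) 1, HasSum (fun n => a n * z ^ (2 * n)) (f z)) →
      (∀ z ∈ ball (0 : ℂ) 1, ‖f z‖ ≤ 1) →
      ∀ r : ℝ, 0 ≤ r → r ≤ 1 / Real.sqrt 3 →
        ∑' n : ℕ, ‖a n‖ * r ^ (2 * n)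
          + (1 / (1 + ‖a 0‖) + r ^ 2 / (1 - r ^ 2)) *
              ∑' n : ℕ, ‖a (n + 1)‖ ^ 2 * r ^ (4 * (n + 1)) ≤ 1) ∧
    -- sharpness for the functions `z ↦ (z² - t)/(1 - t z²)`, `t ∈ (0,1)`
    (∀ r : ℝ, 1 / Real.sqrt 3 < r → r < 1 →
      ∃ t : ℝ, 0 < t ∧ t < 1 ∧ ∃ b : ℕ → ℂ,
        (∀ z ∈ ball (0 : ℂ) 1,
          HasSum (fun n => b n * z ^ (2 * n)) ((z ^ 2 - (t : ℂ)) / (1 - (t : ℂ) * z ^ 2))) ∧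
        1 < ∑' n : ℕ, ‖b n‖ * r ^ (2 * n)
          + (1 / (1 + ‖b 0‖) + r ^ 2 / (1 - r ^ 2)) *
              ∑' n : ℕ, ‖b (n + 1)‖ ^ 2 * r ^ (4 * (n + 1))) := by
  constructor
  · intro f a hf hb r hr0 hr
    exact ebohr_part1 f a hf hb r hr0 hr
  · intro r h1 h2
    exact ebohr_part2 r h1 h2
end

section
/- If f(z) = \sum_{n=0}^\infty a_{2n+1} z^{2n+1} is an odd analytic function on the unit disk with |f(z)| \le 1, then \sum_{n=0}^\infty |a_{2n+1}| r^{2n+1} + (\frac{r}{1+|a_1|} + \frac{r^3}{1-r^2}) \sum_{n=1}^\infty |a_{2n+1}|^2 r^{4n} \le 1 for all |z| = r \le \tilde{r}_2, where \tilde{r}_2 \approx 0.731348 is the minimal positive root of 5r^4 + 4r^3 - 2r^2 - 4r + 1 = 0. -/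
open Metric

open Filter ENNReal NNReal

/-- Cauchy coefficient estimate: if `∑ c m z^m = f z` on the unit ball and `‖f‖ ≤ 1` there,
then every coefficient has norm at most 1. -/
lemma coeff_le_one (f : ℂ → ℂ) (c : ℕ → ℂ)
    (hsum : ∀ z ∈ ball (0 : ℂ) 1, HasSum (fun m => c m * z ^ m) (f z))
    (hb : ∀ z ∈ ball (0 : ℂ) 1, ‖f z‖ ≤ 1) :
    ∀ m, ‖c m‖ ≤ 1 := by
  set p : FormalMultilinearSeries ℂ ℂ ℂ := FormalMultilinearSeries.ofScalars ℂ c with hp_def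
  have hpn : ∀ n, ‖p n‖ = ‖c n‖ := fun n => FormalMultilinearSeries.ofScalars_norm ℂ c n
  have hp : HasFPowerSeriesOnBall f p 0 1 := by
    constructor
    · -- 1 ≤ p.radius
      apply ENNReal.le_of_forall_nnreal_lt
      intro ρ hρ
      have hρ1 : (ρ : ℝ) < 1 := by exact_mod_cast hρ
      have hmem : ((ρ : ℝ) : ℂ) ∈ ball (0 : ℂ) 1 := by
        simp [Complex.norm_of_nonneg ρ.coe_nonneg, hρ1]
      have hs := (hsum _ hmem).summable
      have ht : Tendsto (fun n => ‖c n * ((ρ : ℝ) : ℂ) ^ n‖) atTop (nhds 0) := by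
        simpa using hs.tendsto_atTop_zero.norm
      obtain ⟨C, hC⟩ := ht.bddAbove_range
      apply p.le_radius_of_bound C
      intro n
      have := hC ⟨n, rfl⟩
      simpa [hpn, norm_mul, norm_pow, Complex.norm_real, abs_of_nonneg ρ.coe_nonneg] using this
    · exact one_pos
    · intro y hy
      have hy' : y ∈ ball (0 : ℂ) 1 := by
        rw [mem_ball_zero_iff]
        have := mem_emetric_ball_zero_iff.mp hy
        rw [← ofReal_norm] at this
        exact ENNReal.ofReal_lt_one.mp this
      have hcoeff : ∀ n, p.coeff n = c n := by
        intro n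
        have h1 : p.coeff n = p n (fun _ => 1) := rfl
        rw [h1, hp_def, FormalMultilinearSeries.ofScalars_apply_eq]
        simp
      have := hsum y hy'
      simpa [FormalMultilinearSeries.apply_eq_pow_smul_coeff, hcoeff, smul_eq_mul, mul_comm]
        using this
  have hball : Metric.eball (0:ℂ) (1:ℝ≥0∞) = ball (0:ℂ) 1 := by
    rw [show ((1:ℝ≥0∞)) = ((1:ℝ≥0):ℝ≥0∞) by norm_cast, Metric.emetric_ball_nnreal]
    norm_num
  have hd : DifferentiableOn ℂ f (ball (0:ℂ) 1) := hball ▸ hp.differentiableOn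
  have key : ∀ R : ℝ, 0 < R → R < 1 → ∀ m, ‖c m‖ * R ^ m ≤ 1 := by
    intro R hR0 hR1 m
    set Rn : ℝ≥0 := ⟨R, hR0.le⟩ with hRn
    have hRn' : (Rn : ℝ) = R := rfl
    have hcb : DifferentiableOn ℂ f (closedBall (0:ℂ) Rn) :=
      hd.mono (closedBall_subset_ball (by rw [hRn']; exact hR1))
    have h2 : HasFPowerSeriesOnBall f (cauchyPowerSeries f 0 Rn) 0 Rn :=
      hcb.hasFPowerSeriesOnBall (by exact_mod_cast hR0)
    have huniq : p = cauchyPowerSeries f 0 R := by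
      rw [← hRn']
      exact hp.hasFPowerSeriesAt.eq_formalMultilinearSeries h2.hasFPowerSeriesAt
    have hcont : Continuous fun θ : ℝ => f (circleMap 0 R θ) := by
      apply hd.continuousOn.comp_continuous (continuous_circleMap 0 R)
      intro θ
      simp only [mem_ball_zero_iff, norm_circleMap_zero]
      rwa [abs_of_pos hR0]
    have hint : ∫ θ in (0:ℝ)..2*Real.pi, ‖f (circleMap 0 R θ)‖ ≤ 2*Real.pi := by
      calc ∫ θ in (0:ℝ)..2*Real.pi, ‖f (circleMap 0 R θ)‖
          ≤ ∫ _ in (0:ℝ)..2*Real.pi, (1:ℝ) := by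
            apply intervalIntegral.integral_mono_on Real.two_pi_pos.le
              (hcont.norm.intervalIntegrable _ _) intervalIntegrable_const
            intro θ _
            have hmem : circleMap 0 R θ ∈ ball (0:ℂ) 1 := by
              simp only [mem_ball_zero_iff, norm_circleMap_zero]
              rwa [abs_of_pos hR0]
            simpa using hb _ hmem
        _ = 2*Real.pi := by simp
    have hbnd := norm_cauchyPowerSeries_le f 0 R m
    have hle1 : ‖c m‖ ≤ |R|⁻¹ ^ m := by
      rw [← hpn m, huniq]
      refine hbnd.trans ?_
      have h2pi : (0:ℝ) < 2 * Real.pi := Real.two_pi_pos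
      have : (2 * Real.pi)⁻¹ * ∫ θ in (0:ℝ)..2*Real.pi, ‖f (circleMap 0 R θ)‖ ≤ 1 := by
        rw [inv_mul_le_iff₀ h2pi]
        simpa using hint
      have hpow : (0:ℝ) ≤ |R|⁻¹ ^ m := by positivity
      nlinarith [hpow]
    have hRabs : |R| = R := abs_of_pos hR0
    calc ‖c m‖ * R ^ m ≤ |R|⁻¹ ^ m * R ^ m := by
          apply mul_le_mul_of_nonneg_right hle1 (by positivity)
      _ = 1 := by rw [hRabs, ← mul_pow, inv_mul_cancel₀ hR0.ne', one_pow]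
  intro m
  have ht : Tendsto (fun R : ℝ => ‖c m‖ * R ^ m)
      (nhdsWithin 1 (Set.Iio 1)) (nhds (‖c m‖)) := by
    have : Tendsto (fun R : ℝ => ‖c m‖ * R ^ m) (nhds 1)
        (nhds (‖c m‖ * 1 ^ m)) :=
      ((continuous_pow m).tendsto 1).const_mul _
    simpa using this.mono_left nhdsWithin_le_nhds
  refine le_of_tendsto ht ?_
  filter_upwards [Ioo_mem_nhdsLT_of_mem (by norm_num : (1:ℝ) ∈ Set.Ioc (0:ℝ) 1)] with R hR
  exact key R hR.1 hR.2 m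

/-- Refined Bohr inequality for odd bounded analytic functions, up to the minimal
positive root `r̃₂` of `5r⁴ + 4r³ - 2r² - 4r + 1 = 0`. -/
theorem odd_refined_bohr (f : ℂ → ℂ) (a : ℕ → ℂ) (r₂ : ℝ)
    (hsum : ∀ z ∈ ball (0 : ℂ) 1, HasSum (fun n => a n * z ^ (2 * n + 1)) (f z))
    (hb : ∀ z ∈ ball (0 : ℂ) 1, ‖f z‖ ≤ 1)
    (hroot : 0 < r₂ ∧ 5 * r₂ ^ 4 + 4 * r₂ ^ 3 - 2 * r₂ ^ 2 - 4 * r₂ + 1 = 0 ∧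
      ∀ s : ℝ, 0 < s → 5 * s ^ 4 + 4 * s ^ 3 - 2 * s ^ 2 - 4 * s + 1 = 0 → r₂ ≤ s)
    (r : ℝ) (hr0 : 0 ≤ r) (hr : r ≤ r₂) :
    ∑' n : ℕ, ‖a n‖ * r ^ (2 * n + 1)
      + (r / (1 + ‖a 0‖) + r ^ 3 / (1 - r ^ 2)) *
          ∑' n : ℕ, ‖a (n + 1)‖ ^ 2 * r ^ (4 * (n + 1)) ≤ 1 := by

  obtain ⟨hr2pos, hr2root, hr2min⟩ := hroot
  -- Step 1: `r₂ ≤ 6/25`, via a root of the quartic in `(0, 6/25]`.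
  have hr24 : r₂ ≤ 6/25 := by
    have hcont : ContinuousOn (fun s : ℝ => 5*s^4 + 4*s^3 - 2*s^2 - 4*s + 1)
        (Set.Icc (0:ℝ) (6/25)) := by fun_prop
    have hIVT := intermediate_value_Icc' (by norm_num : (0:ℝ) ≤ 6/25) hcont
    have h0 : (0:ℝ) ∈ Set.Icc ((fun s : ℝ => 5*s^4 + 4*s^3 - 2*s^2 - 4*s + 1) (6/25))
        ((fun s : ℝ => 5*s^4 + 4*s^3 - 2*s^2 - 4*s + 1) 0) := by
      constructor <;> norm_num
    obtain ⟨s, hs, hs0⟩ := hIVT h0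
    have hspos : 0 < s := by
      rcases hs.1.lt_or_eq with h | h
      · exact h
      · exfalso; rw [← h] at hs0; norm_num at hs0
    exact (hr2min s hspos hs0).trans hs.2
  have hrle : r ≤ 6/25 := hr.trans hr24
  -- Step 2: all coefficients have modulus at most 1.
  set c : ℕ → ℂ := fun m => if m % 2 = 1 then a (m / 2) else 0 with hc_def
  have hsum' : ∀ z ∈ ball (0:ℂ) 1, HasSum (fun m => c m * z ^ m) (f z) := by
    intro z hz
    have hinj : Function.Injective (fun n : ℕ => 2*n+1) := by
      intro x y h
      simp only at h
      omega
    rw [← Function.Injective.hasSum_iff hinj ?_]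
    · have : ((fun m => c m * z ^ m) ∘ fun n : ℕ => 2*n+1)
          = fun n => a n * z ^ (2*n+1) := by
        funext n
        have h1 : (2*n+1) % 2 = 1 := by omega
        have h2 : (2*n+1) / 2 = n := by omega
        simp [hc_def, h1, h2]
      rw [this]
      exact hsum z hz
    · intro m hm
      have hm2 : m % 2 = 0 := by
        by_contra h
        exact hm ⟨m / 2, by show 2 * (m / 2) + 1 = m; omega⟩
      simp [hc_def, hm2]
  have hcle := coeff_le_one f c hsum' hb
  have ha_le : ∀ n, ‖a n‖ ≤ 1 := by
    intro n
    have h1 : (2*n+1) % 2 = 1 := by omega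
    have h2 : (2*n+1) / 2 = n := by omega
    have := hcle (2*n+1)
    simpa [hc_def, h1, h2] using this
  -- Step 3: elementary estimates.
  have hr2lt : r^2 < 1 := by nlinarith
  have hr4lt : r^4 < 1 := by nlinarith
  have hpos2 : (0:ℝ) < 1 - r^2 := by linarith
  have hpos4 : (0:ℝ) < 1 - r^4 := by linarith
  -- the first sum
  have hgeo2 : Summable (fun n : ℕ => r ^ (2*n+1)) := by
    have he : (fun n : ℕ => r ^ (2*n+1)) = fun n => r * (r^2)^n := by
      funext n; rw [← pow_mul]; ring
    rw [he]
    exact (summable_geometric_of_lt_one (by positivity) hr2lt).mul_left r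
  have hterm1 : ∀ n : ℕ, ‖a n‖ * r ^ (2*n+1) ≤ r ^ (2*n+1) := by
    intro n
    have hp : (0:ℝ) ≤ r ^ (2*n+1) := by positivity
    exact mul_le_of_le_one_left hp (ha_le n)
  have hS1 : Summable (fun n : ℕ => ‖a n‖ * r ^ (2*n+1)) :=
    Summable.of_nonneg_of_le (fun n => by positivity) hterm1 hgeo2
  have hT1 : ∑' n : ℕ, ‖a n‖ * r ^ (2*n+1) ≤ r / (1 - r^2) := by
    calc ∑' n : ℕ, ‖a n‖ * r ^ (2*n+1)
        ≤ ∑' n : ℕ, r ^ (2*n+1) := Summable.tsum_le_tsum hterm1 hS1 hgeo2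
      _ = r / (1 - r^2) := by
          have he : (fun n : ℕ => r ^ (2*n+1)) = fun n => r * (r^2)^n := by
            funext n; rw [← pow_mul]; ring
          rw [he, _root_.tsum_mul_left, tsum_geometric_of_lt_one (by positivity) hr2lt,
            div_eq_mul_inv]
  -- the second sum
  have hgeo4 : Summable (fun n : ℕ => r ^ (4*(n+1))) := by
    have he : (fun n : ℕ => r ^ (4*(n+1))) = fun n => (r^4)^n * r^4 := by
      funext n; rw [← pow_mul]; ring
    rw [he]
    exact (summable_geometric_of_lt_one (by positivity) hr4lt).mul_right _
  have hterm2 : ∀ n : ℕ, ‖a (n+1)‖ ^ 2 * r ^ (4*(n+1)) ≤ r ^ (4*(n+1)) := by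
    intro n
    have hp : (0:ℝ) ≤ r ^ (4*(n+1)) := by positivity
    have hsq : ‖a (n+1)‖ ^ 2 ≤ 1 := by
      nlinarith [ha_le (n+1), norm_nonneg (a (n+1))]
    exact mul_le_of_le_one_left hp hsq
  have hS2 : Summable (fun n : ℕ => ‖a (n+1)‖ ^ 2 * r ^ (4*(n+1))) :=
    Summable.of_nonneg_of_le (fun n => by positivity) hterm2 hgeo4
  have hT2 : ∑' n : ℕ, ‖a (n+1)‖ ^ 2 * r ^ (4*(n+1)) ≤ r^4 / (1 - r^4) := by
    calc ∑' n : ℕ, ‖a (n+1)‖ ^ 2 * r ^ (4*(n+1))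
        ≤ ∑' n : ℕ, r ^ (4*(n+1)) := Summable.tsum_le_tsum hterm2 hS2 hgeo4
      _ = r^4 / (1 - r^4) := by
          have he : (fun n : ℕ => r ^ (4*(n+1))) = fun n => (r^4)^n * r^4 := by
            funext n; rw [← pow_mul]; ring
          rw [he, _root_.tsum_mul_right, tsum_geometric_of_lt_one (by positivity) hr4lt]
          rw [div_eq_mul_inv]
          ring
  have hT2nonneg : (0:ℝ) ≤ ∑' n : ℕ, ‖a (n+1)‖ ^ 2 * r ^ (4*(n+1)) :=
    tsum_nonneg fun n => by positivity
  -- the coefficient factor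
  have hb0 : (0:ℝ) ≤ ‖a 0‖ := norm_nonneg _
  have hfac_le : r / (1 + ‖a 0‖) + r^3 / (1 - r^2) ≤ r + r^3 / (1 - r^2) := by
    have : r / (1 + ‖a 0‖) ≤ r := div_le_self hr0 (by linarith)
    linarith
  have hfac_nonneg : (0:ℝ) ≤ r / (1 + ‖a 0‖) + r^3 / (1 - r^2) :=
    add_nonneg (div_nonneg hr0 (by linarith)) (div_nonneg (by positivity) hpos2.le)
  have hfac_nonneg' : (0:ℝ) ≤ r + r^3 / (1 - r^2) :=
    add_nonneg hr0 (div_nonneg (by positivity) hpos2.le)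
  have hprod : (r / (1 + ‖a 0‖) + r^3 / (1 - r^2)) *
      ∑' n : ℕ, ‖a (n+1)‖ ^ 2 * r ^ (4*(n+1))
      ≤ (r + r^3 / (1 - r^2)) * (r^4 / (1 - r^4)) :=
    mul_le_mul hfac_le hT2 hT2nonneg hfac_nonneg'
  have hfinal : r / (1 - r^2) + (r + r^3 / (1 - r^2)) * (r^4 / (1 - r^4)) ≤ 1 := by
    have hkey : r / (1 - r^2) + (r + r^3 / (1 - r^2)) * (r^4 / (1 - r^4))
        = r / ((1 - r^2) * (1 - r^4)) := by
      field_simp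
      ring
    rw [hkey, div_le_one (by positivity)]
    nlinarith [sq_nonneg r, pow_nonneg hr0 3, pow_nonneg hr0 4, pow_nonneg hr0 6]
  linarith
end
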